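/- The Laplace transform of g₀(x) = x^{-3/2} e^{-1/x} (x > 0) is ℒ[g₀](u + iv) = √π · e^{-2(z₊ + i z₋)}, where 2z₊² = √(u²+v²) + u and 2z₋² = √(u²+v²) - u (with appropriate sign of z₋ matching the sign of v), valid for Re(u+iv) ≥ 0; in particular, for real s > 0, ∫₀^∞ e^{-sx} x^{-3/2} e^{-1/x} dx = √π e^{-2√s}. -/

import Mathlib

open MeasureTheory Complex Set Real

/-!
For real `s > 0` the substitution `x = t⁻²` turns the integral into
`2 ∫₀^∞ e^{-t² - s/t²} dt = 2 e^{-2√s} ∫₀^∞ e^{-(t - √s/t)²} dt`, and the Cauchy–Schlömilch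
substitution `u = t - √s/t`, together with its companion `t ↦ √s/t`, shows that the last
integral is half of the Gaussian integral `√π`. For complex `z`, both sides are holomorphic in
`Re z > 0` and continuous on `Re z ≥ 0` (the Laplace transform by dominated convergence, as `g₀`
is integrable), so the identity theorem extends the equality from the positive reals.
-/

open Filter Topology

section CauchySchlomilch

variable {E : Type*} [NormedAddCommGroup E] [NormedSpace ℝ E] {b : ℝ}

lemma hasDerivAt_const_div {t : ℝ} (ht : t ≠ 0) :
    HasDerivAt (fun t : ℝ => b / t) (-b / t ^ 2) t := by
  simpa using (hasDerivAt_const t b).fun_div (hasDerivAt_id' t) ht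

lemma hasDerivAt_sub_const_div {t : ℝ} (ht : t ≠ 0) :
    HasDerivAt (fun t : ℝ => t - b / t) (1 + b / t ^ 2) t := by
  simpa only [neg_div, sub_neg_eq_add] using
    (hasDerivAt_id' t).fun_sub (hasDerivAt_const_div (b := b) ht)

lemma strictMonoOn_sub_const_div (hb : 0 ≤ b) :
    StrictMonoOn (fun t : ℝ => t - b / t) (Ioi 0) := fun x hx _ _ hxy => by
  have := div_le_div_of_nonneg_left hb hx hxy.le
  dsimp only
  linarith

lemma image_sub_const_div_Ioi (hb : 0 < b) : (fun t : ℝ => t - b / t) '' Ioi 0 = univ := by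
  refine eq_univ_of_forall fun u => ?_
  -- the positive root of `t ^ 2 - u t - b`
  set D := Real.sqrt (u ^ 2 + 4 * b)
  have hD : D ^ 2 = u ^ 2 + 4 * b := Real.sq_sqrt (by positivity)
  have hu : |u| < D := by
    rw [← Real.sqrt_sq_eq_abs]; exact Real.sqrt_lt_sqrt (sq_nonneg u) (by linarith)
  have ht : 0 < (u + D) / 2 := by linarith [neg_abs_le u]
  have hbt : b / ((u + D) / 2) = (D - u) / 2 := by
    rw [div_eq_iff ht.ne']; linear_combination -hD / 4
  exact ⟨_, ht, by simp only [hbt]; ring⟩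

lemma image_const_div_Ioi (hb : 0 < b) : (fun t : ℝ => b / t) '' Ioi 0 = Ioi 0 :=
  Subset.antisymm (image_subset_iff.2 fun _ ht => div_pos hb ht)
    fun u hu => ⟨b / u, div_pos hb hu, div_div_cancel₀ hb.ne'⟩

lemma integral_Ioi_one_add_div_sq_smul_comp_sub_div (hb : 0 < b) (f : ℝ → E) :
    ∫ t in Ioi 0, (1 + b / t ^ 2) • f (t - b / t) = ∫ u, f u := by
  have h := integral_image_eq_integral_abs_deriv_smul measurableSet_Ioi
    (fun t ht => (hasDerivAt_sub_const_div (mem_Ioi.1 ht).ne').hasDerivWithinAt)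
    (strictMonoOn_sub_const_div hb.le).injOn f
  rw [image_sub_const_div_Ioi hb, setIntegral_univ] at h
  refine h ▸ setIntegral_congr_fun measurableSet_Ioi fun t ht => ?_
  have : 0 < 1 + b / t ^ 2 := by have := mem_Ioi.1 ht; positivity
  rw [abs_of_pos this]

lemma integral_Ioi_div_sq_smul_comp_sub_div (hb : 0 < b) (f : ℝ → E) :
    ∫ t in Ioi 0, (b / t ^ 2) • f (t - b / t) = ∫ t in Ioi 0, f (b / t - t) := by
  have h := integral_image_eq_integral_abs_deriv_smul measurableSet_Ioi
    (fun t ht => (hasDerivAt_const_div (mem_Ioi.1 ht).ne').hasDerivWithinAt)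
    (LeftInvOn.injOn (f₁' := (b / ·)) (fun _ _ => div_div_cancel₀ hb.ne')) fun t => f (b / t - t)
  rw [image_const_div_Ioi hb] at h
  refine h ▸ setIntegral_congr_fun measurableSet_Ioi fun t ht => ?_
  simp only [div_div_cancel₀ hb.ne', neg_div, abs_neg]
  rw [abs_of_pos (by have := mem_Ioi.1 ht; positivity)]

lemma integrableOn_Ioi_one_add_div_sq_smul_comp_sub_div (hb : 0 < b) {f : ℝ → E}
    (hf : Integrable f) : IntegrableOn (fun t => (1 + b / t ^ 2) • f (t - b / t)) (Ioi 0) := by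
  have h := (integrableOn_image_iff_integrableOn_abs_deriv_smul measurableSet_Ioi
    (fun t ht => (hasDerivAt_sub_const_div (mem_Ioi.1 ht).ne').hasDerivWithinAt)
    (strictMonoOn_sub_const_div hb.le).injOn f).1
    (by rw [image_sub_const_div_Ioi hb]; exact hf.integrableOn)
  refine h.congr_fun (fun t ht => ?_) measurableSet_Ioi
  have : 0 < 1 + b / t ^ 2 := by have := mem_Ioi.1 ht; positivity
  simp only [abs_of_pos this]

lemma integrableOn_Ioi_comp_sub_const_div (hb : 0 < b) {f : ℝ → E} (hf : Integrable f) :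
    IntegrableOn (fun t => f (t - b / t)) (Ioi 0) := by
  refine IntegrableOn.congr_fun ((integrableOn_Ioi_one_add_div_sq_smul_comp_sub_div hb hf).bdd_smul
    (φ := fun t => (1 + b / t ^ 2)⁻¹) 1 (Measurable.aestronglyMeasurable (by fun_prop)) ?_)
    (fun t ht => ?_) measurableSet_Ioi
  · filter_upwards [ae_restrict_mem measurableSet_Ioi] with t ht
    have : 1 ≤ 1 + b / t ^ 2 := le_add_of_nonneg_right (by have := mem_Ioi.1 ht; positivity)
    rw [norm_inv, Real.norm_of_nonneg (by linarith)]
    exact inv_le_one_of_one_le₀ this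
  · have : 0 < 1 + b / t ^ 2 := by have := mem_Ioi.1 ht; positivity
    simp [smul_smul, this.ne']

lemma integral_Ioi_comp_sub_const_div_of_even (hb : 0 < b) {f : ℝ → E} (hf : Integrable f)
    (heven : ∀ u, f (-u) = f u) :
    ∫ t in Ioi 0, f (t - b / t) = (2 : ℝ)⁻¹ • ∫ u, f u := by
  have hI := integrableOn_Ioi_comp_sub_const_div hb hf
  have hJ : IntegrableOn (fun t => (b / t ^ 2) • f (t - b / t)) (Ioi 0) := by
    refine ((integrableOn_Ioi_one_add_div_sq_smul_comp_sub_div hb hf).sub hI).congr_fun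
      (fun t _ => ?_) measurableSet_Ioi
    simp only [Pi.sub_apply, add_smul, one_smul, add_sub_cancel_left]
  have hJI : ∫ t in Ioi 0, (b / t ^ 2) • f (t - b / t) = ∫ t in Ioi 0, f (t - b / t) := by
    rw [integral_Ioi_div_sq_smul_comp_sub_div hb]
    exact setIntegral_congr_fun measurableSet_Ioi fun t _ => by rw [← heven, neg_sub]
  rw [← integral_Ioi_one_add_div_sq_smul_comp_sub_div hb f]
  simp only [add_smul, one_smul]
  rw [integral_add hI hJ, hJI, ← two_smul ℝ, smul_smul, inv_mul_cancel₀ two_ne_zero, one_smul]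

end CauchySchlomilch

section InverseSquareSubstitution

variable {E : Type*} [NormedAddCommGroup E] [NormedSpace ℝ E]

lemma abs_neg_two_mul_rpow_smul_rpow_smul_comp_rpow_neg_two {t : ℝ} (ht : 0 < t) (f : ℝ → E) :
    (|(-2 : ℝ)| * t ^ ((-2 : ℝ) - 1)) • (t ^ (-2 : ℝ)) ^ (-(3 : ℝ) / 2) • f (t ^ (-2 : ℝ)) =
      (2 : ℝ) • f (t ^ 2)⁻¹ := by
  rw [smul_smul, ← Real.rpow_mul ht.le, mul_assoc, ← Real.rpow_add ht, Real.rpow_neg ht.le,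
    Real.rpow_two]
  norm_num

lemma integral_Ioi_rpow_neg_three_halves_smul (f : ℝ → E) :
    ∫ x in Ioi 0, x ^ (-(3 : ℝ) / 2) • f x = (2 : ℝ) • ∫ t in Ioi 0, f (t ^ 2)⁻¹ := by
  rw [← integral_comp_rpow_Ioi _ (by norm_num : (-2 : ℝ) ≠ 0), ← integral_smul]
  exact setIntegral_congr_fun measurableSet_Ioi fun t ht =>
    abs_neg_two_mul_rpow_smul_rpow_smul_comp_rpow_neg_two ht f

lemma integrableOn_Ioi_rpow_neg_three_halves_smul_iff {f : ℝ → E} :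
    IntegrableOn (fun x => x ^ (-(3 : ℝ) / 2) • f x) (Ioi 0) ↔
      IntegrableOn (fun t => f (t ^ 2)⁻¹) (Ioi 0) := by
  rw [← integrableOn_Ioi_comp_rpow_iff _ (by norm_num : (-2 : ℝ) ≠ 0),
    integrableOn_congr_fun (fun _ ht =>
      abs_neg_two_mul_rpow_smul_rpow_smul_comp_rpow_neg_two (mem_Ioi.1 ht) f) measurableSet_Ioi]
  exact integrable_smul_iff two_ne_zero _

end InverseSquareSubstitution

lemma integrable_exp_neg_sq : Integrable fun u : ℝ => Real.exp (-u ^ 2) := by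
  simpa using integrable_exp_neg_mul_sq one_pos

lemma integral_exp_neg_sq : ∫ u : ℝ, Real.exp (-u ^ 2) = Real.sqrt π := by
  simpa using integral_gaussian 1

lemma exp_neg_div_sq_mul_exp_neg_sq {s t : ℝ} (hs : 0 ≤ s) (ht : t ≠ 0) :
    Real.exp (-s / t ^ 2) * Real.exp (-t ^ 2) =
      Real.exp (-2 * Real.sqrt s) * Real.exp (-(t - Real.sqrt s / t) ^ 2) := by
  rw [← Real.exp_add, ← Real.exp_add]
  congr 1
  field_simp
  linear_combination Real.sq_sqrt hs

lemma integral_Ioi_exp_neg_div_sq_mul_exp_neg_sq {s : ℝ} (hs : 0 < s) :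
    ∫ t in Ioi 0, Real.exp (-s / t ^ 2) * Real.exp (-t ^ 2) =
      Real.sqrt π / 2 * Real.exp (-2 * Real.sqrt s) := by
  rw [setIntegral_congr_fun measurableSet_Ioi fun t ht =>
      exp_neg_div_sq_mul_exp_neg_sq hs.le (mem_Ioi.1 ht).ne',
    integral_const_mul, integral_Ioi_comp_sub_const_div_of_even (Real.sqrt_pos.2 hs)
      integrable_exp_neg_sq (fun u => by rw [neg_sq]), integral_exp_neg_sq, smul_eq_mul]
  ring

lemma integrableOn_Ioi_rpow_neg_three_halves_mul_exp_neg_inv :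
    IntegrableOn (fun x : ℝ => x ^ (-(3 : ℝ) / 2) * Real.exp (-1 / x)) (Ioi 0) := by
  refine integrableOn_Ioi_rpow_neg_three_halves_smul_iff.2 ?_
  simpa [div_inv_eq_mul] using integrable_exp_neg_sq.integrableOn

lemma integral_Ioi_exp_neg_mul_mul_rpow_neg_three_halves_mul_exp_neg_inv {s : ℝ} (hs : 0 < s) :
    ∫ x in Ioi 0, Real.exp (-s * x) * (x ^ (-(3 : ℝ) / 2) * Real.exp (-1 / x)) =
      Real.sqrt π * Real.exp (-2 * Real.sqrt s) := by
  calc ∫ x in Ioi 0, Real.exp (-s * x) * (x ^ (-(3 : ℝ) / 2) * Real.exp (-1 / x))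
      = ∫ x in Ioi 0, x ^ (-(3 : ℝ) / 2) • (Real.exp (-s * x) * Real.exp (-1 / x)) := by
        simp only [smul_eq_mul, mul_left_comm]
    _ = 2 * ∫ t in Ioi 0, Real.exp (-s / t ^ 2) * Real.exp (-t ^ 2) := by
        rw [integral_Ioi_rpow_neg_three_halves_smul, smul_eq_mul]
        simp only [div_inv_eq_mul, ← div_eq_mul_inv, neg_mul, one_mul]
    _ = Real.sqrt π * Real.exp (-2 * Real.sqrt s) := by
        rw [integral_Ioi_exp_neg_div_sq_mul_exp_neg_sq hs]; ring

noncomputable def laplaceTransform (f : ℝ → ℂ) (z : ℂ) : ℂ :=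
  ∫ x in Ioi (0 : ℝ), cexp (-z * x) * f x

lemma norm_cexp_neg_mul_ofReal_le {z : ℂ} {ε x : ℝ} (hε : ε ≤ z.re) (hx : 0 ≤ x) :
    ‖cexp (-z * x)‖ ≤ Real.exp (-ε * x) := by
  rw [Complex.norm_exp]
  gcongr
  simp only [neg_mul, neg_re, mul_re, ofReal_re, ofReal_im, mul_zero, sub_zero]
  nlinarith

lemma mul_exp_neg_mul_le_inv {ε : ℝ} (hε : 0 < ε) (x : ℝ) : x * Real.exp (-ε * x) ≤ ε⁻¹ := by
  have := Real.add_one_le_exp (ε * x)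
  rw [neg_mul, Real.exp_neg, ← div_eq_mul_inv, div_le_iff₀ (Real.exp_pos _), inv_mul_eq_div,
    le_div_iff₀ hε]
  linarith

section LaplaceTransform

variable {f : ℝ → ℂ}

lemma aestronglyMeasurable_cexp_neg_mul_mul (hf : IntegrableOn f (Ioi 0)) (z : ℂ) :
    AEStronglyMeasurable (fun x : ℝ => cexp (-z * x) * f x) (volume.restrict (Ioi 0)) :=
  (by fun_prop : Continuous fun x : ℝ => cexp (-z * x)).aestronglyMeasurable.mul hf.1

lemma ae_norm_cexp_neg_mul_mul_le {z : ℂ} (hz : 0 ≤ z.re) :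
    ∀ᵐ x : ℝ ∂volume.restrict (Ioi 0), ‖cexp (-z * x) * f x‖ ≤ ‖f x‖ := by
  filter_upwards [ae_restrict_mem measurableSet_Ioi] with x hx
  rw [norm_mul]
  refine mul_le_of_le_one_left (norm_nonneg _) ?_
  simpa using norm_cexp_neg_mul_ofReal_le hz (le_of_lt hx)

lemma integrableOn_cexp_neg_mul_mul (hf : IntegrableOn f (Ioi 0)) {z : ℂ} (hz : 0 ≤ z.re) :
    IntegrableOn (fun x : ℝ => cexp (-z * x) * f x) (Ioi 0) :=
  hf.norm.mono' (aestronglyMeasurable_cexp_neg_mul_mul hf z) (ae_norm_cexp_neg_mul_mul_le hz)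

lemma continuousOn_laplaceTransform (hf : IntegrableOn f (Ioi 0)) :
    ContinuousOn (laplaceTransform f) {z | 0 ≤ z.re} :=
  continuousOn_of_dominated (fun z _ => aestronglyMeasurable_cexp_neg_mul_mul hf z)
    (fun _ hz => ae_norm_cexp_neg_mul_mul_le hz) hf.norm (ae_of_all _ fun _ => by fun_prop)

lemma differentiableOn_laplaceTransform (hf : IntegrableOn f (Ioi 0)) :
    DifferentiableOn ℂ (laplaceTransform f) {z | 0 < z.re} := by
  intro z₀ hz₀
  set ε := z₀.re / 2
  have hε : 0 < ε := half_pos hz₀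
  have hnhds : {z : ℂ | ε < z.re} ∈ 𝓝 z₀ :=
    (isOpen_lt continuous_const continuous_re).mem_nhds (half_lt_self (a := z₀.re) hz₀)
  refine (hasDerivAt_integral_of_dominated_loc_of_deriv_le hnhds
    (F' := fun z x => cexp (-z * x) * (-x) * f x) (bound := fun x => ε⁻¹ * ‖f x‖)
    (Eventually.of_forall (aestronglyMeasurable_cexp_neg_mul_mul hf))
    (integrableOn_cexp_neg_mul_mul hf (le_of_lt hz₀))
    ((by fun_prop : Continuous fun x : ℝ => cexp (-z₀ * x) * -x).aestronglyMeasurable.mul hf.1)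
    ?_ (hf.norm.const_mul _) ?_).2.differentiableAt.differentiableWithinAt
  · filter_upwards [ae_restrict_mem measurableSet_Ioi] with x (hx : 0 < x) z (hz : ε < z.re)
    calc ‖cexp (-z * x) * -x * f x‖ = ‖cexp (-z * x)‖ * x * ‖f x‖ := by
          rw [norm_mul, norm_mul, norm_neg, norm_real, Real.norm_of_nonneg hx.le]
      _ ≤ Real.exp (-ε * x) * x * ‖f x‖ := by
          gcongr; exact norm_cexp_neg_mul_ofReal_le hz.le hx.le
      _ ≤ ε⁻¹ * ‖f x‖ := by
          rw [mul_comm (Real.exp _)]; gcongr; exact mul_exp_neg_mul_le_inv hε x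
  · refine ae_of_all _ fun x z _ => ?_
    simpa using ((hasDerivAt_id z).neg.mul_const (x : ℂ)).cexp.mul_const (f x)

end LaplaceTransform

lemma eqOn_re_nonneg_of_ofReal_eq {F G : ℂ → ℂ} (hF : DifferentiableOn ℂ F {z | 0 < z.re})
    (hG : DifferentiableOn ℂ G {z | 0 < z.re}) (hF' : ContinuousOn F {z | 0 ≤ z.re})
    (hG' : ContinuousOn G {z | 0 ≤ z.re}) (heq : ∀ s : ℝ, 0 < s → F s = G s) :
    EqOn F G {z | 0 ≤ z.re} := by
  have hU : IsOpen {z : ℂ | 0 < z.re} := isOpen_lt continuous_const continuous_re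
  have hreal : ∃ᶠ z in 𝓝[≠] (1 : ℂ), F z = G z := by
    have hmaps : Tendsto ((↑) : ℝ → ℂ) (𝓝[≠] 1) (𝓝[≠] 1) := by
      simpa using continuous_ofReal.continuousWithinAt.tendsto_nhdsWithin
        (x := (1 : ℝ)) (t := {(1 : ℂ)}ᶜ) fun s hs => by simpa using hs
    refine hmaps.frequently (Eventually.frequently ?_)
    filter_upwards [nhdsWithin_le_nhds (lt_mem_nhds one_pos)] with s hs using heq s hs
  have hopen : EqOn F G {z | 0 < z.re} :=
    (hF.analyticOnNhd hU).eqOn_of_preconnected_of_frequently_eq (hG.analyticOnNhd hU)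
      (convex_halfSpace_re_gt 0).isPreconnected (by simp) hreal
  exact hopen.of_subset_closure hF' hG' (ofPred_subset_ofPred.2 fun _ => le_of_lt)
    (closure_setOfPred_lt_re 0).superset

lemma laplaceTransform_ofReal_apply_ofReal (f : ℝ → ℝ) (s : ℝ) :
    laplaceTransform (fun x => (f x : ℂ)) s =
      ((∫ x in Ioi 0, Real.exp (-s * x) * f x : ℝ) : ℂ) := by
  rw [laplaceTransform, ← integral_complex_ofReal]
  simp only [ofReal_mul, ofReal_exp, ofReal_neg]

lemma eqOn_laplaceTransform_ofReal {f : ℝ → ℝ} (hf : IntegrableOn f (Ioi 0)) {G : ℂ → ℂ}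
    (hG : DifferentiableOn ℂ G {z | 0 < z.re}) (hG' : ContinuousOn G {z | 0 ≤ z.re})
    (heq : ∀ s : ℝ, 0 < s → ((∫ x in Ioi 0, Real.exp (-s * x) * f x : ℝ) : ℂ) = G s) :
    EqOn (laplaceTransform fun x => (f x : ℂ)) G {z | 0 ≤ z.re} :=
  eqOn_re_nonneg_of_ofReal_eq (differentiableOn_laplaceTransform hf.ofReal) hG
    (continuousOn_laplaceTransform hf.ofReal) hG' fun s hs => by
      rw [laplaceTransform_ofReal_apply_ofReal, heq s hs]

lemma continuousOn_cexp_neg_two_mul_cpow_one_half :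
    ContinuousOn (fun z : ℂ => cexp (-2 * z ^ ((1 : ℂ) / 2))) {z | 0 ≤ z.re} :=
  fun z hz => (continuous_exp.continuousAt.comp (continuousAt_const.mul
    (continuousAt_cpow_const_of_re_pos (Or.inl hz) (by norm_num)))).continuousWithinAt

lemma differentiableOn_cexp_neg_two_mul_cpow_one_half :
    DifferentiableOn ℂ (fun z : ℂ => cexp (-2 * z ^ ((1 : ℂ) / 2))) {z | 0 < z.re} :=
  fun _ hz => ((differentiableAt_id.cpow_const (Or.inl hz)).const_mul _).cexp.differentiableWithinAt

/-- Laplace transform of `g₀(x) = x^{-3/2} e^{-1/x}`: for `Re z ≥ 0`,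
`ℒ[g₀](z) = √π e^{-2√z}` (principal square root, i.e. `√z = z₊ + i z₋` with
`2z₊² = |z| + Re z`, `2z₋² = |z| - Re z`); in particular, for real `s > 0`,
`∫₀^∞ e^{-sx} x^{-3/2} e^{-1/x} dx = √π e^{-2√s}`. -/
theorem laplace_transform_g0
    (z : ℂ) (hz : 0 ≤ z.re) :
    (∫ x in Set.Ioi (0 : ℝ),
        Complex.exp (-z * (x : ℂ)) * ((x ^ (-(3 : ℝ) / 2) * Real.exp (-1 / x) : ℝ) : ℂ)
      = (Real.sqrt π : ℂ) * Complex.exp (-2 * z ^ ((1 : ℂ) / 2)))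
    ∧ ∀ s : ℝ, 0 < s →
      ∫ x in Set.Ioi (0 : ℝ), Real.exp (-s * x) * (x ^ (-(3 : ℝ) / 2) * Real.exp (-1 / x))
        = Real.sqrt π * Real.exp (-2 * Real.sqrt s) := by
  have hreal := fun s (hs : 0 < s) =>
    integral_Ioi_exp_neg_mul_mul_rpow_neg_three_halves_mul_exp_neg_inv hs
  refine ⟨eqOn_laplaceTransform_ofReal integrableOn_Ioi_rpow_neg_three_halves_mul_exp_neg_inv
    (differentiableOn_cexp_neg_two_mul_cpow_one_half.const_mul _)
    (continuousOn_cexp_neg_two_mul_cpow_one_half.const_mul _) (fun s hs => ?_) hz, hreal⟩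
  rw [hreal s hs, Real.sqrt_eq_rpow s]
  push_cast [ofReal_cpow hs.le]
  ring_nf
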